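/- Let n ≥ 1 and let S be a real n×n matrix with S_{ii} > 0 for all i, S_{ij} ≤ 0 for all i ≠ j, and Σ_j S_{ij} > 0 for every row i. Let f(x) = x(x−1)(2x−1)/2, let 0 < τ ≤ 2, and let μ > 0 satisfy μ S_{ii} ≤ 1/2 for every i. Suppose U, V ∈ ℝⁿ satisfy the Crank–Nicolson scheme (V_i − U_i)/τ + (μ/τ) Σ_j S_{ij} (V_j + U_j) + ( f(V_i) + f(U_i) )/2 = 0 for every i, and 0 ≤ U_j ≤ 1 for all j. Then 0 ≤ V_j ≤ 1 for all j. -/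
import Mathlib


/-- `f(u) = u(u-1)(2u-1)/2`, the derivative of the double-well potential `F(u) = u²(u-1)²/4`. -/
noncomputable def fAC (x : ℝ) : ℝ := x * (x - 1) * (2 * x - 1) / 2

lemma g_hi (τ a u : ℝ) (hτ0 : 0 < τ) (hτ2 : τ ≤ 2) (ha : a ≤ 1/2)
    (hu0 : 0 ≤ u) (hu1 : u ≤ 1) : (1 - a) * u - (τ/2) * fAC u ≤ 1 - a := by
  unfold fAC
  nlinarith [mul_nonneg hu0 (sub_nonneg.2 hu1), mul_nonneg (mul_nonneg hu0 hu0) (sub_nonneg.2 hu1),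
    sq_nonneg u, sq_nonneg (1 - u), mul_nonneg (sub_nonneg.2 hu1) (sub_nonneg.2 hu1),
    mul_nonneg hτ0.le (mul_nonneg hu0 (sub_nonneg.2 hu1)),
    mul_nonneg (sub_nonneg.2 hτ2) (mul_nonneg hu0 (sub_nonneg.2 hu1)),
    mul_nonneg (sub_nonneg.2 hτ2) (mul_nonneg (mul_nonneg hu0 hu0) (sub_nonneg.2 hu1))]

lemma g_lo (τ a u : ℝ) (hτ0 : 0 < τ) (hτ2 : τ ≤ 2) (ha : a ≤ 1/2)
    (hu0 : 0 ≤ u) (hu1 : u ≤ 1) : 0 ≤ (1 - a) * u - (τ/2) * fAC u := by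
  unfold fAC
  nlinarith [mul_nonneg hu0 (sub_nonneg.2 hu1), mul_nonneg (mul_nonneg hu0 hu0) (sub_nonneg.2 hu1),
    mul_nonneg hu0 (mul_nonneg hu0 hu0),
    mul_nonneg hτ0.le (mul_nonneg hu0 (sub_nonneg.2 hu1)),
    mul_nonneg (sub_nonneg.2 hτ2) (mul_nonneg hu0 (sub_nonneg.2 hu1)),
    mul_nonneg (sub_nonneg.2 hτ2) (mul_nonneg (mul_nonneg hu0 hu0) (sub_nonneg.2 hu1))]

theorem stmt19 (n : ℕ) (hn : 1 ≤ n) (S : Matrix (Fin n) (Fin n) ℝ)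
    (hdiag : ∀ i, 0 < S i i) (hoff : ∀ i j, i ≠ j → S i j ≤ 0)
    (hrow : ∀ i, 0 < ∑ j, S i j)
    (τ : ℝ) (hτ0 : 0 < τ) (hτ2 : τ ≤ 2)
    (μ : ℝ) (hμ : 0 < μ) (hμS : ∀ i, μ * S i i ≤ 1 / 2)
    (U V : Fin n → ℝ)
    (hscheme : ∀ i, (V i - U i) / τ + (μ / τ) * ∑ j, S i j * (V j + U j)
      + (fAC (V i) + fAC (U i)) / 2 = 0)
    (hU : ∀ j, 0 ≤ U j ∧ U j ≤ 1) :
    ∀ j, 0 ≤ V j ∧ V j ≤ 1 := by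
  have hne : Nonempty (Fin n) := ⟨⟨0, hn⟩⟩
  -- rewritten scheme
  have key : ∀ i, V i + μ * ∑ j, S i j * V j + (τ/2) * fAC (V i)
      = U i - μ * ∑ j, S i j * U j - (τ/2) * fAC (U i) := by
    intro i
    have h0 := hscheme i
    have hsum : ∑ j, S i j * (V j + U j) = ∑ j, S i j * V j + ∑ j, S i j * U j := by
      rw [← Finset.sum_add_distrib]; apply Finset.sum_congr rfl; intros; ring
    rw [hsum] at h0
    field_simp at h0
    linarith
  have hub : ∀ j, V j ≤ 1 := by
    obtain ⟨i, hi⟩ := Finite.exists_max V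
    intro j
    refine le_trans (hi j) ?_
    by_contra hc
    push_neg at hc
    have e1 : ∑ j ∈ Finset.univ.erase i, S i j * U j + S i i * U i = ∑ j, S i j * U j := by
      simpa using Finset.sum_erase_add Finset.univ (fun j => S i j * U j) (Finset.mem_univ i)
    have e2 : ∑ j ∈ Finset.univ.erase i, S i j + S i i = ∑ j, S i j := by
      simpa using Finset.sum_erase_add Finset.univ (fun j => S i j) (Finset.mem_univ i)
    have hb : ∑ j ∈ Finset.univ.erase i, S i j ≤ ∑ j ∈ Finset.univ.erase i, S i j * U j := by
      apply Finset.sum_le_sum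
      intro j hj
      have hji : j ≠ i := (Finset.mem_erase.1 hj).1
      nlinarith [hoff i j hji.symm, (hU j).1, (hU j).2]
    have hsumU : S i i * U i + (∑ j, S i j) - S i i ≤ ∑ j, S i j * U j := by linarith
    have hmuU : μ * (S i i * U i + (∑ j, S i j) - S i i) ≤ μ * ∑ j, S i j * U j :=
      mul_le_mul_of_nonneg_left hsumU hμ.le
    have hVs : (∑ j, S i j) * V i ≤ ∑ j, S i j * V j := by
      rw [Finset.sum_mul]
      apply Finset.sum_le_sum
      intro j _
      rcases eq_or_ne j i with rfl | hji
      · exact le_rfl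
      · exact mul_le_mul_of_nonpos_left (hi j) (hoff i j hji.symm)
    have hmuV : μ * ((∑ j, S i j) * V i) ≤ μ * ∑ j, S i j * V j :=
      mul_le_mul_of_nonneg_left hVs hμ.le
    have hpos : 0 < μ * ((∑ j, S i j) * V i) :=
      mul_pos hμ (mul_pos (hrow i) (by linarith))
    have hf : 0 < (τ/2) * fAC (V i) := by
      apply mul_pos (by linarith)
      unfold fAC
      have := mul_pos (mul_pos (show (0:ℝ) < V i by linarith) (show (0:ℝ) < V i - 1 by linarith))
        (show (0:ℝ) < 2 * V i - 1 by linarith)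
      linarith
    have hg := g_hi τ (μ * S i i) (U i) hτ0 hτ2 (hμS i) (hU i).1 (hU i).2
    have hmr : 0 < μ * ∑ j, S i j := mul_pos hμ (hrow i)
    nlinarith [key i]
  have hlb : ∀ j, 0 ≤ V j := by
    obtain ⟨i, hi⟩ := Finite.exists_min V
    intro j
    refine le_trans ?_ (hi j)
    by_contra hc
    push_neg at hc
    have e1 : ∑ j ∈ Finset.univ.erase i, S i j * U j + S i i * U i = ∑ j, S i j * U j := by
      simpa using Finset.sum_erase_add Finset.univ (fun j => S i j * U j) (Finset.mem_univ i)
    have hb : ∑ j ∈ Finset.univ.erase i, S i j * U j ≤ 0 := by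
      apply Finset.sum_nonpos
      intro j hj
      have hji : j ≠ i := (Finset.mem_erase.1 hj).1
      exact mul_nonpos_of_nonpos_of_nonneg (hoff i j hji.symm) (hU j).1
    have hsumU : ∑ j, S i j * U j ≤ S i i * U i := by linarith
    have hmuU : μ * ∑ j, S i j * U j ≤ μ * (S i i * U i) :=
      mul_le_mul_of_nonneg_left hsumU hμ.le
    have hVs : ∑ j, S i j * V j ≤ (∑ j, S i j) * V i := by
      rw [Finset.sum_mul]
      apply Finset.sum_le_sum
      intro j _
      rcases eq_or_ne j i with rfl | hji
      · exact le_rfl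
      · exact mul_le_mul_of_nonpos_left (hi j) (hoff i j hji.symm)
    have hmuV : μ * ∑ j, S i j * V j ≤ μ * ((∑ j, S i j) * V i) :=
      mul_le_mul_of_nonneg_left hVs hμ.le
    have hneg : μ * ((∑ j, S i j) * V i) < 0 :=
      mul_neg_of_pos_of_neg hμ (mul_neg_of_pos_of_neg (hrow i) hc)
    have hf : (τ/2) * fAC (V i) < 0 := by
      apply mul_neg_of_pos_of_neg (by linarith)
      unfold fAC
      have := mul_neg_of_pos_of_neg (mul_pos_of_neg_of_neg hc (show V i - 1 < 0 by linarith))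
        (show 2 * V i - 1 < 0 by linarith)
      linarith
    have hg := g_lo τ (μ * S i i) (U i) hτ0 hτ2 (hμS i) (hU i).1 (hU i).2
    nlinarith [key i]
  exact fun j => ⟨hlb j, hub j⟩
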